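/- arXiv:1509.05422 — 2 statements merged into one kernel-verified Lean document; each statement's English description precedes it below -/
import Mathlib

section
/- Let 𝐘 be a random variable taking values in a finite set S, let A be an event with ℙ(A) > 0, and let E be a nonempty proper subset of S. Then ℙ(𝐘 ∈ E | A) · (log|S| − log|E|) ≤ log|S| − H(𝐘 | A) + log 2, where H(𝐘 | A) denotes the Shannon entropy of 𝐘 with respect to the probability measure conditioned on A. -/
open MeasureTheory ProbabilityTheory

/-- The Shannon entropy (natural logarithm) of the random variable `Y`, taking values in the
finite set `S`, computed with respect to the probability measure conditioned on the event `A`. -/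
noncomputable def condEntropyOn {Ω S : Type*} [MeasurableSpace Ω] [Fintype S]
    (μ : Measure Ω) (Y : Ω → S) (A : Set Ω) : ℝ :=
  ∑ y : S, Real.negMulLog ((μ[|A]) (Y ⁻¹' {y})).toReal

/-- Grouping bound: the entropy contribution of a finite set `T` is at most
`negMulLog P + P * log |T|` where `P` is the total mass on `T`. -/
lemma aux_sum_negMulLog {S : Type*} (T : Finset S) (hT : T.Nonempty) (q : S → ℝ)
    (hq : ∀ y, 0 ≤ q y) :
    ∑ y ∈ T, Real.negMulLog (q y) ≤
      Real.negMulLog (∑ y ∈ T, q y) + (∑ y ∈ T, q y) * Real.log T.card := by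
  set P := ∑ y ∈ T, q y with hP
  have hn : (0:ℝ) < T.card := by exact_mod_cast hT.card_pos
  have hJ := Real.concaveOn_negMulLog.le_map_sum (t := T) (w := fun _ => (T.card:ℝ)⁻¹)
    (p := q) (fun i _ => by positivity)
    (by rw [Finset.sum_const, nsmul_eq_mul]; field_simp)
    (fun i _ => hq i)
  simp only [smul_eq_mul] at hJ
  rw [← Finset.mul_sum, ← Finset.mul_sum, ← hP] at hJ
  have hJ' : ∑ y ∈ T, Real.negMulLog (q y) ≤ (T.card : ℝ) * Real.negMulLog ((T.card:ℝ)⁻¹ * P) := by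
    rw [mul_comm]
    calc ∑ y ∈ T, Real.negMulLog (q y)
        = ((T.card:ℝ)⁻¹ * ∑ y ∈ T, Real.negMulLog (q y)) * (T.card:ℝ) := by
          field_simp
      _ ≤ Real.negMulLog ((T.card:ℝ)⁻¹ * P) * (T.card:ℝ) := by
          apply mul_le_mul_of_nonneg_right hJ hn.le
  rcases eq_or_lt_of_le (Finset.sum_nonneg fun y _ => hq y : (0:ℝ) ≤ P) with h0 | hPpos
  · have hq0 : ∀ y ∈ T, q y = 0 := (Finset.sum_eq_zero_iff_of_nonneg (fun y _ => hq y)).mp h0.symm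
    have hP0 : P = 0 := by rw [hP, ← h0]
    rw [hP0]
    simp only [Real.negMulLog_zero, zero_mul, add_zero]
    rw [Finset.sum_congr rfl fun y hy => by rw [hq0 y hy]]
    simp
  · refine hJ'.trans_eq ?_
    rw [Real.negMulLog, Real.negMulLog, Real.log_mul (by positivity) (ne_of_gt hPpos),
      Real.log_inv]
    have hc : (T.card:ℝ) * (T.card:ℝ)⁻¹ = 1 := mul_inv_cancel₀ hn.ne'
    field_simp
    ring

/-- If the conditional entropy `H(Y | A)` is close to maximal, then `Y` conditioned on `A`
cannot concentrate on a small set: for any nonempty proper subset `E` of `S`,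
`ℙ(Y ∈ E | A) (log|S| − log|E|) ≤ log|S| − H(Y|A) + log 2`. -/
theorem weak_uniform_distribution
    {Ω S : Type*} [MeasurableSpace Ω] [MeasurableSpace S] [MeasurableSingletonClass S]
    [Fintype S] [DecidableEq S]
    (μ : Measure Ω) [IsProbabilityMeasure μ]
    (Y : Ω → S) (hY : Measurable Y)
    (A : Set Ω) (hA : MeasurableSet A) (hApos : μ A ≠ 0)
    (E : Finset S) (hE : E.Nonempty) (hEproper : E ≠ Finset.univ) :
    ((μ[|A]) (Y ⁻¹' (E : Set S))).toReal *
        (Real.log (Fintype.card S) - Real.log E.card)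
      ≤ Real.log (Fintype.card S) - condEntropyOn μ Y A + Real.log 2 := by
  haveI : IsProbabilityMeasure (μ[|A]) := cond_isProbabilityMeasure hApos
  set ν := μ[|A]
  set q : S → ℝ := fun y => (ν (Y ⁻¹' {y})).toReal with hqdef
  have hq : ∀ y, 0 ≤ q y := fun y => ENNReal.toReal_nonneg
  have hfin : ∀ (s : Set S), ν (Y ⁻¹' s) ≠ ⊤ := fun s => measure_ne_top ν _
  have hsum : ∀ T : Finset S, ∑ y ∈ T, q y = (ν (Y ⁻¹' (T : Set S))).toReal := by
    intro T
    rw [hqdef]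
    rw [← ENNReal.toReal_sum (fun y _ => hfin _)]
    congr 1
    exact sum_measure_preimage_singleton T (fun y _ => hY (measurableSet_singleton y))
  set p := (ν (Y ⁻¹' (E : Set S))).toReal with hpdef
  have hsumE : ∑ y ∈ E, q y = p := hsum E
  have hsumtot : ∑ y : S, q y = 1 := by
    rw [hsum Finset.univ]
    simp [measure_univ]
  have hsumEc : ∑ y ∈ Eᶜ, q y = 1 - p := by
    have := Finset.sum_add_sum_compl E q
    rw [hsumE, hsumtot] at this
    linarith
  have hEc : Eᶜ.Nonempty := by
    rw [← Finset.card_pos, Finset.card_compl]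
    have : E.card < Fintype.card S := Finset.card_lt_card (lt_of_le_of_ne (Finset.subset_univ E)
      hEproper |>.trans_le (le_refl _))
    omega
  have hp01 : 0 ≤ p ∧ p ≤ 1 := by
    constructor
    · rw [← hsumE]; exact Finset.sum_nonneg fun y _ => hq y
    · rw [← hsumE, ← hsumtot]
      exact Finset.sum_le_sum_of_subset_of_nonneg (Finset.subset_univ E) fun y _ _ => hq y
  -- split the entropy
  have hH : condEntropyOn μ Y A =
      ∑ y ∈ E, Real.negMulLog (q y) + ∑ y ∈ Eᶜ, Real.negMulLog (q y) := by
    rw [condEntropyOn, Finset.sum_add_sum_compl E]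
  have h1 := aux_sum_negMulLog E hE q hq
  have h2 := aux_sum_negMulLog Eᶜ hEc q hq
  rw [hsumE] at h1
  rw [hsumEc] at h2
  -- binary entropy bound
  have hbin : Real.negMulLog p + Real.negMulLog (1 - p) ≤ Real.log 2 := by
    rw [← Real.binEntropy_eq_negMulLog_add_negMulLog_one_sub]
    exact Real.binEntropy_le_log_two
  -- complement cardinality bound
  have hcards : (1 - p) * Real.log Eᶜ.card ≤ (1 - p) * Real.log (Fintype.card S) := by
    apply mul_le_mul_of_nonneg_left _ (by linarith [hp01.2])
    apply Real.log_le_log (by exact_mod_cast hEc.card_pos)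
    exact_mod_cast Finset.card_le_univ Eᶜ
  linarith [hH, h1, h2, hbin, hcards]
end

section
/- There exists ε₀ > 0 such that for every ε ∈ (0, ε₀), every natural number a, integers b and h with h ≠ 0, and every natural number H sufficiently large depending on ε, a, h, the following holds. Let 𝒫_H be the set of primes p with ε²H/2 < p ≤ ε²H and P_H := ∏_{p ∈ 𝒫_H} p; let (c_p)_{p ∈ 𝒫_H} be complex numbers with |c_p| = 1; let x_{1,j}, x_{2,j} (1 ≤ j ≤ H) be complex numbers of modulus at most 1; and for y ∈ ℤ/P_Hℤ define F(y) := ∑_{p ∈ 𝒫_H} c_p ∑_{j : j, j+ph ∈ [1,H]} 1_{ay + j ≡ pb (mod ap)} · x_{1,j} · x_{2,j+ph}. Then the number of y ∈ ℤ/P_Hℤ with |F(y) − (1/P_H) ∑_{y' ∈ ℤ/P_Hℤ} F(y')| ≥ ε² H/log H is at most exp(−ε⁷ H/log H) · P_H. -/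
open Finset

open scoped Classical in
/-- The set `𝒫_H` of primes `p` with `ε²H/2 < p ≤ ε²H`. -/
noncomputable def mediumPrimes (ε : ℝ) (H : ℕ) : Finset ℕ :=
  (Finset.range (H + 1)).filter
    (fun p => p.Prime ∧ ε ^ 2 * H / 2 < (p : ℝ) ∧ (p : ℝ) ≤ ε ^ 2 * H)

/-- `P_H`, the product of the primes in `𝒫_H`. -/
noncomputable def mediumPrimesProd (ε : ℝ) (H : ℕ) : ℕ :=
  ∏ p ∈ mediumPrimes ε H, p

/-- The bilinear form
`F(y) = ∑_{p ∈ 𝒫_H} c_p ∑_{j : j, j+ph ∈ [1,H]} 1_{ay+j ≡ pb (mod ap)} x_{1,j} x_{2,j+ph}`,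
with `y` a representative of a residue class in `ℤ/P_Hℤ`. -/
noncomputable def bilinearForm (ε : ℝ) (H a : ℕ) (b h : ℤ) (c : ℕ → ℂ)
    (x₁ x₂ : ℤ → ℂ) (y : ℕ) : ℂ :=
  ∑ p ∈ mediumPrimes ε H, c p *
    ∑ j ∈ (Finset.Icc (1 : ℤ) (H : ℤ)).filter
        (fun j => 1 ≤ j + (p : ℤ) * h ∧ j + (p : ℤ) * h ≤ (H : ℤ)),
      (if ((a : ℤ) * (y : ℤ) + j) % ((a : ℤ) * (p : ℤ)) =
          ((p : ℤ) * b) % ((a : ℤ) * (p : ℤ)) then (1 : ℂ) else 0) * x₁ j * x₂ (j + (p : ℤ) * h)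

/-!
Each summand of `F(y)` depends on `y` only through `y mod p`, so `F(y) = ∑_{p ∈ 𝒫_H} F_p(y mod p)`,
and `F_p` is bounded by `H/(ap) + 1 ≤ 3/ε²` because `p > ε²H/2`. By the Chinese remainder theorem
the residues `(y mod p)_p` of a uniformly random `y ∈ ℤ/P_Hℤ` are independent and uniform, so
the exponential-moment (Hoeffding) argument, applied to the real and imaginary parts of the
centred sum, bounds the proportion of `y` with `|F(y) - 𝔼F| ≥ t` by `4 exp(-t²/(32 |𝒫_H| B²))`.
Chebyshev's bound `∏_{p ≤ x} p ≤ 4^x` gives `|𝒫_H| ≤ 4ε²H/log H`; with `t = ε²H/log H` and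
`B = 3/ε²` the exponent is `ε⁶H/(1152 log H)`, which beats `ε⁷H/log H + log 4` once
`ε < 1/2304` and `H/log H` is large.
-/

open Real Filter

theorem sum_range_mul_mod_mod {β : Type*} [AddCommMonoid β] {m n : ℕ} (hmn : m.Coprime n)
    (f : ℕ → ℕ → β) :
    ∑ y ∈ range (m * n), f (y % m) (y % n) = ∑ u ∈ range m, ∑ v ∈ range n, f u v := by
  have hinj : Set.InjOn (fun y => (y % m, y % n)) (range (m * n)) := by
    intro y hy z hz hyz
    simp only [coe_range, Set.mem_Iio, Prod.mk.injEq] at hy hz hyz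
    exact ((Nat.modEq_and_modEq_iff_modEq_mul hmn).1 hyz).eq_of_lt_of_lt hy hz
  have himage : (range (m * n)).image (fun y => (y % m, y % n)) = range m ×ˢ range n := by
    refine eq_of_subset_of_card_le (fun uv huv => ?_) ?_
    · obtain ⟨y, hy, rfl⟩ := mem_image.1 huv
      have hmn0 : m * n ≠ 0 := by rw [mem_range] at hy; omega
      simp only [mem_product, mem_range]
      exact ⟨Nat.mod_lt _ (Nat.pos_of_ne_zero (left_ne_zero_of_mul hmn0)),
        Nat.mod_lt _ (Nat.pos_of_ne_zero (right_ne_zero_of_mul hmn0))⟩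
    · rw [card_image_of_injOn hinj, card_product, card_range, card_range, card_range]
  rw [← sum_product', ← himage, sum_image hinj]

theorem sum_range_prod_mod_eq_prod_sum {β : Type*} [CommSemiring β] (S : Finset ℕ)
    (hS : (S : Set ℕ).Pairwise Nat.Coprime) (φ : ℕ → ℕ → β) :
    ∑ y ∈ range (∏ p ∈ S, p), ∏ p ∈ S, φ p (y % p) = ∏ p ∈ S, ∑ r ∈ range p, φ p r := by
  induction S using Finset.cons_induction with
  | empty => simp
  | cons q S hq ih =>
    rw [coe_cons, Set.pairwise_insert] at hS
    have hcop : q.Coprime (∏ p ∈ S, p) :=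
      Nat.Coprime.prod_right fun p hp => (hS.2 p hp (ne_of_mem_of_not_mem hp hq).symm).1
    simp only [prod_cons]
    calc ∑ y ∈ range (q * ∏ p ∈ S, p), φ q (y % q) * ∏ p ∈ S, φ p (y % p)
        = ∑ y ∈ range (q * ∏ p ∈ S, p),
            φ q (y % q) * ∏ p ∈ S, φ p (y % (∏ p ∈ S, p) % p) := by
          refine sum_congr rfl fun y _ => ?_
          congr 1
          exact prod_congr rfl fun p hp => by rw [Nat.mod_mod_of_dvd _ (dvd_prod_of_mem _ hp)]
      _ = (∑ r ∈ range q, φ q r) * ∏ p ∈ S, ∑ r ∈ range p, φ p r := by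
          rw [sum_range_mul_mod_mod hcop (fun u v => φ q u * ∏ p ∈ S, φ p (v % p)), ← ih hS.1,
            sum_mul_sum]

theorem sum_range_prod_mod_of_mem {β : Type*} [AddCommMonoid β] {S : Finset ℕ}
    (hS : (S : Set ℕ).Pairwise Nat.Coprime) {p : ℕ} (hp : p ∈ S) (f : ℕ → β) :
    ∑ y ∈ range (∏ q ∈ S, q), f (y % p) = (∏ q ∈ S.erase p, q) • ∑ r ∈ range p, f r := by
  have hcop : p.Coprime (∏ q ∈ S.erase p, q) :=
    Nat.Coprime.prod_right fun q hq => hS hp (mem_of_mem_erase hq) (ne_of_mem_erase hq).symm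
  rw [← mul_prod_erase S (fun q : ℕ => q) hp, sum_range_mul_mod_mod hcop (fun u _ => f u)]
  simp only [sum_const, card_range, smul_sum]

theorem Real.exp_mul_le_cosh_add_div_mul_sinh {l M x : ℝ} (hM : 0 < M) (hx : |x| ≤ M) :
    exp (l * x) ≤ cosh (l * M) + x / M * sinh (l * M) := by
  obtain ⟨hxl, hxu⟩ := abs_le.1 hx
  have hconv := convexOn_exp.2 (Set.mem_univ (l * M)) (Set.mem_univ (-(l * M)))
    (div_nonneg (by linarith) (by positivity) : 0 ≤ (M + x) / (2 * M))
    (div_nonneg (by linarith) (by positivity) : 0 ≤ (M - x) / (2 * M))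
    (by field_simp; ring)
  simp only [smul_eq_mul] at hconv
  calc exp (l * x)
      = exp ((M + x) / (2 * M) * (l * M) + (M - x) / (2 * M) * -(l * M)) := by
        congr 1; field_simp; ring
    _ ≤ _ := hconv
    _ = _ := by rw [cosh_eq, sinh_eq]; field_simp; ring

theorem sum_exp_mul_le_card_mul_exp {ι : Type*} (s : Finset ι) (g : ι → ℝ) {M : ℝ} (hM : 0 < M)
    (hg : ∀ i ∈ s, |g i| ≤ M) (h0 : ∑ i ∈ s, g i = 0) (l : ℝ) :
    ∑ i ∈ s, exp (l * g i) ≤ #s * exp (l ^ 2 * M ^ 2 / 2) :=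
  calc ∑ i ∈ s, exp (l * g i)
      ≤ ∑ i ∈ s, (cosh (l * M) + g i / M * sinh (l * M)) :=
        sum_le_sum fun i hi => exp_mul_le_cosh_add_div_mul_sinh hM (hg i hi)
    _ = #s * cosh (l * M) := by
        rw [sum_add_distrib, ← sum_mul, ← sum_div, h0]; simp
    _ ≤ #s * exp (l ^ 2 * M ^ 2 / 2) := by
        grw [cosh_le_exp_half_sq, mul_pow]

section Concentration

variable {S : Finset ℕ} (hS : (S : Set ℕ).Pairwise Nat.Coprime)
include hS

theorem sum_exp_mul_sum_mod_le (g : ℕ → ℕ → ℝ) {M : ℝ} (hM : 0 < M)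
    (hg : ∀ p ∈ S, ∀ r ∈ range p, |g p r| ≤ M) (h0 : ∀ p ∈ S, ∑ r ∈ range p, g p r = 0) (l : ℝ) :
    ∑ y ∈ range (∏ p ∈ S, p), exp (l * ∑ p ∈ S, g p (y % p))
      ≤ (∏ p ∈ S, p : ℕ) * exp (#S * (l ^ 2 * M ^ 2 / 2)) :=
  calc ∑ y ∈ range (∏ p ∈ S, p), exp (l * ∑ p ∈ S, g p (y % p))
      = ∑ y ∈ range (∏ p ∈ S, p), ∏ p ∈ S, exp (l * g p (y % p)) := by
        simp only [mul_sum, exp_sum]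
    _ = ∏ p ∈ S, ∑ r ∈ range p, exp (l * g p r) :=
        sum_range_prod_mod_eq_prod_sum S hS fun p r => exp (l * g p r)
    _ ≤ ∏ p ∈ S, (p * exp (l ^ 2 * M ^ 2 / 2)) :=
        prod_le_prod (fun _ _ => sum_nonneg fun _ _ => (exp_pos _).le) fun p hp => by
          simpa using sum_exp_mul_le_card_mul_exp _ _ hM (hg p hp) (h0 p hp) l
    _ = (∏ p ∈ S, p : ℕ) * exp (#S * (l ^ 2 * M ^ 2 / 2)) := by
        rw [prod_mul_distrib, prod_const, Nat.cast_prod, ← exp_nat_mul]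

theorem card_filter_le_of_sum_mod_ge (g : ℕ → ℕ → ℝ) {M : ℝ} (hM : 0 < M)
    (hg : ∀ p ∈ S, ∀ r ∈ range p, |g p r| ≤ M) (h0 : ∀ p ∈ S, ∑ r ∈ range p, g p r = 0)
    {N s : ℝ} (hN : 0 < N) (hSN : #S ≤ N) (hs : 0 ≤ s) :
    (#{y ∈ range (∏ p ∈ S, p) | s ≤ ∑ p ∈ S, g p (y % p)} : ℝ)
      ≤ (∏ p ∈ S, p : ℕ) * exp (-s ^ 2 / (2 * N * M ^ 2)) := by
  set l := s / (N * M ^ 2)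
  have hl : 0 ≤ l := by positivity
  have markov : (#{y ∈ range (∏ p ∈ S, p) | s ≤ ∑ p ∈ S, g p (y % p)} : ℝ) * exp (l * s)
      ≤ ∑ y ∈ range (∏ p ∈ S, p), exp (l * ∑ p ∈ S, g p (y % p)) := by
    rw [← nsmul_eq_mul]
    refine (card_nsmul_le_sum _ _ _ fun y hy => ?_).trans
      (sum_le_sum_of_subset_of_nonneg (filter_subset _ _) fun _ _ _ => (exp_pos _).le)
    exact exp_le_exp.2 (mul_le_mul_of_nonneg_left (mem_filter.1 hy).2 hl)
  have hexp : exp (#S * (l ^ 2 * M ^ 2 / 2)) ≤ exp (-s ^ 2 / (2 * N * M ^ 2)) * exp (l * s) := by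
    rw [← exp_add]
    refine exp_le_exp.2 ((mul_le_mul_of_nonneg_right hSN (by positivity)).trans (le_of_eq ?_))
    simp only [l]
    field_simp
    ring
  refine le_of_mul_le_mul_right ?_ (exp_pos (l * s))
  calc _ ≤ _ := markov
    _ ≤ _ := sum_exp_mul_sum_mod_le hS g hM hg h0 l
    _ ≤ _ := by grw [hexp]
    _ = _ := (mul_assoc _ _ _).symm

theorem card_filter_le_of_abs_sum_mod_ge (g : ℕ → ℕ → ℝ) {M : ℝ} (hM : 0 < M)
    (hg : ∀ p ∈ S, ∀ r ∈ range p, |g p r| ≤ M) (h0 : ∀ p ∈ S, ∑ r ∈ range p, g p r = 0)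
    {N s : ℝ} (hN : 0 < N) (hSN : #S ≤ N) (hs : 0 ≤ s) :
    (#{y ∈ range (∏ p ∈ S, p) | s ≤ |∑ p ∈ S, g p (y % p)|} : ℝ)
      ≤ 2 * (∏ p ∈ S, p : ℕ) * exp (-s ^ 2 / (2 * N * M ^ 2)) := by
  have hpos := card_filter_le_of_sum_mod_ge hS g hM hg h0 hN hSN hs
  have hneg := card_filter_le_of_sum_mod_ge hS (fun p r => -g p r) hM
    (fun p hp r hr => (abs_neg (g p r)).trans_le (hg p hp r hr))
    (fun p hp => by rw [sum_neg_distrib, h0 p hp, neg_zero]) hN hSN hs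
  simp only [le_abs, sum_neg_distrib, filter_or] at hneg ⊢
  grw [card_union_le]
  rw [Nat.cast_add]
  linarith

theorem card_filter_le_of_norm_sum_mod_ge (g : ℕ → ℕ → ℂ) {M : ℝ} (hM : 0 < M)
    (hg : ∀ p ∈ S, ∀ r ∈ range p, ‖g p r‖ ≤ M) (h0 : ∀ p ∈ S, ∑ r ∈ range p, g p r = 0)
    {N t : ℝ} (hN : 0 < N) (hSN : #S ≤ N) (ht : 0 ≤ t) :
    (#{y ∈ range (∏ p ∈ S, p) | t ≤ ‖∑ p ∈ S, g p (y % p)‖} : ℝ)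
      ≤ 4 * (∏ p ∈ S, p : ℕ) * exp (-t ^ 2 / (8 * N * M ^ 2)) := by
  have hre := card_filter_le_of_abs_sum_mod_ge hS (fun p r => (g p r).re) hM
    (fun p hp r hr => (Complex.abs_re_le_norm _).trans (hg p hp r hr))
    (fun p hp => by rw [← Complex.re_sum, h0 p hp, Complex.zero_re]) (s := t / 2) hN hSN
    (by positivity)
  have him := card_filter_le_of_abs_sum_mod_ge hS (fun p r => (g p r).im) hM
    (fun p hp r hr => (Complex.abs_im_le_norm _).trans (hg p hp r hr))
    (fun p hp => by rw [← Complex.im_sum, h0 p hp, Complex.zero_im]) (s := t / 2) hN hSN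
    (by positivity)
  have hsub : {y ∈ range (∏ p ∈ S, p) | t ≤ ‖∑ p ∈ S, g p (y % p)‖}
      ⊆ {y ∈ range (∏ p ∈ S, p) | t / 2 ≤ |∑ p ∈ S, (g p (y % p)).re|}
        ∪ {y ∈ range (∏ p ∈ S, p) | t / 2 ≤ |∑ p ∈ S, (g p (y % p)).im|} := by
    rw [← filter_or _ _ (range (∏ p ∈ S, p))]
    intro y hy
    rw [mem_filter] at hy ⊢
    refine ⟨hy.1, ?_⟩
    have := hy.2.trans (Complex.norm_le_abs_re_add_abs_im _)
    rw [← Complex.re_sum, ← Complex.im_sum]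
    by_contra! h
    linarith
  grw [hsub, card_union_le]
  rw [Nat.cast_add]
  convert add_le_add hre him using 1
  ring_nf

theorem sum_mod_sub_average {K : Type*} [Field K] [CharZero K] (hS₀ : 0 ∉ S)
    (g : ℕ → ℕ → K) (y : ℕ) :
    ∑ p ∈ S, g p (y % p) - 1 / ((∏ p ∈ S, p : ℕ) : K) *
        ∑ y' ∈ range (∏ p ∈ S, p), ∑ p ∈ S, g p (y' % p)
      = ∑ p ∈ S, (g p (y % p) - (p : K)⁻¹ * ∑ r ∈ range p, g p r) := by
  rw [sum_comm, mul_sum, ← sum_sub_distrib]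
  refine sum_congr rfl fun p hp => ?_
  have hp0 : (p : K) ≠ 0 := Nat.cast_ne_zero.2 (ne_of_mem_of_not_mem hp hS₀)
  have hE0 : ((∏ q ∈ S.erase p, q : ℕ) : K) ≠ 0 :=
    Nat.cast_ne_zero.2 <| prod_ne_zero_iff.2 fun q hq =>
      ne_of_mem_of_not_mem (mem_of_mem_erase hq) hS₀
  rw [sum_range_prod_mod_of_mem hS hp, ← mul_prod_erase S (fun q : ℕ => q) hp, nsmul_eq_mul,
    Nat.cast_mul]
  field_simp

theorem card_filter_le_of_norm_sum_mod_sub_average_ge (hS₀ : 0 ∉ S) (g : ℕ → ℕ → ℂ) {B : ℝ}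
    (hB : 0 < B) (hg : ∀ p ∈ S, ∀ r ∈ range p, ‖g p r‖ ≤ B) {N t : ℝ} (hN : 0 < N)
    (hSN : #S ≤ N) (ht : 0 ≤ t) :
    (#{y ∈ range (∏ p ∈ S, p) | t ≤ ‖∑ p ∈ S, g p (y % p) - 1 / ((∏ p ∈ S, p : ℕ) : ℂ) *
        ∑ y' ∈ range (∏ p ∈ S, p), ∑ p ∈ S, g p (y' % p)‖} : ℝ)
      ≤ 4 * (∏ p ∈ S, p : ℕ) * exp (-t ^ 2 / (32 * N * B ^ 2)) := by
  have hmean : ∀ p ∈ S, ‖(p : ℂ)⁻¹ * ∑ r ∈ range p, g p r‖ ≤ B := fun p hp => by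
    have hp0 : (0 : ℝ) < p := Nat.cast_pos.2 (Nat.pos_of_ne_zero (ne_of_mem_of_not_mem hp hS₀))
    grw [norm_mul, norm_sum_le_of_le _ (hg p hp), norm_inv, Complex.norm_natCast, sum_const,
      card_range, nsmul_eq_mul, inv_mul_cancel_left₀ hp0.ne']
  have hcentered : ∀ p ∈ S, ∑ r ∈ range p, (g p r - (p : ℂ)⁻¹ * ∑ r ∈ range p, g p r) = 0 :=
    fun p hp => by
      rw [sum_sub_distrib, sum_const, card_range, nsmul_eq_mul,
        mul_inv_cancel_left₀ (Nat.cast_ne_zero.2 (ne_of_mem_of_not_mem hp hS₀)), sub_self]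
  simp_rw [sum_mod_sub_average hS hS₀]
  convert card_filter_le_of_norm_sum_mod_ge hS _ (M := 2 * B) (by positivity)
    (fun p hp r hr => (norm_sub_le _ _).trans (by linarith [hg p hp r hr, hmean p hp]))
    hcentered hN hSN ht using 3
  ring

end Concentration

theorem Int.card_filter_Ioc_modEq_le {a b : ℤ} (hab : a ≤ b) (v : ℤ) {r : ℤ} (hr : 0 < r) :
    (#{x ∈ Ioc a b | x ≡ v [ZMOD r]} : ℝ) ≤ (b - a) / r + 1 := by
  have hcard := Int.Ioc_filter_modEq_card a b hr v
  have habq : (a : ℚ) ≤ b := Int.cast_le.2 hab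
  have hq : (#{x ∈ Ioc a b | x ≡ v [ZMOD r]} : ℚ) ≤ (b - a) / r + 1 := by
    have hfloor : ((⌊(b - v) / (r : ℚ)⌋ - ⌊(a - v) / (r : ℚ)⌋ : ℤ) : ℚ) ≤ (b - a) / r + 1 := by
      have := Int.floor_le ((b - v) / (r : ℚ))
      have := Int.lt_floor_add_one ((a - v) / (r : ℚ))
      have : ((b : ℚ) - v) / r - (a - v) / r = (b - a) / r := by ring
      push_cast
      linarith
    rw [← Int.cast_natCast, hcard, Int.cast_max, Int.cast_zero]
    exact max_le hfloor (by positivity)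
  exact_mod_cast hq

theorem mem_mediumPrimes {ε : ℝ} {H p : ℕ} :
    p ∈ mediumPrimes ε H ↔ p < H + 1 ∧ p.Prime ∧ ε ^ 2 * H / 2 < p ∧ (p : ℝ) ≤ ε ^ 2 * H := by
  classical
  rw [mediumPrimes, mem_filter, mem_range]

theorem mediumPrimes_pairwise_coprime (ε : ℝ) (H : ℕ) :
    (mediumPrimes ε H : Set ℕ).Pairwise Nat.Coprime := fun _ hp _ hq hpq =>
  (Nat.coprime_primes (mem_mediumPrimes.1 hp).2.1 (mem_mediumPrimes.1 hq).2.1).2 hpq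

theorem zero_notMem_mediumPrimes (ε : ℝ) (H : ℕ) : 0 ∉ mediumPrimes ε H :=
  fun h => Nat.not_prime_zero (mem_mediumPrimes.1 h).2.1

theorem Real.log_four_le_two : log 4 ≤ 2 := by
  rw [log_four_eq]
  linarith [log_two_lt_d9]

theorem card_mul_log_le_of_forall_prime {S : Finset ℕ} {x y : ℝ} (hx : 0 < x) (hy : 0 ≤ y)
    (hS : ∀ p ∈ S, p.Prime ∧ x < p ∧ (p : ℝ) ≤ y) : #S * log x ≤ y * log 4 := by
  have hsub : S ⊆ {p ∈ range (⌊y⌋₊ + 1) | p.Prime} := fun p hp =>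
    mem_filter.2 ⟨mem_range.2 (Nat.lt_succ_of_le (Nat.le_floor (hS p hp).2.2)), (hS p hp).1⟩
  have hprod : ∏ p ∈ S, p ≤ 4 ^ ⌊y⌋₊ :=
    (prod_le_prod_of_subset_of_one_le' hsub fun p hp _ => (mem_filter.1 hp).2.one_lt.le).trans
      (primorial_le_four_pow _)
  have hpow : x ^ #S ≤ 4 ^ ⌊y⌋₊ :=
    calc x ^ #S = ∏ _p ∈ S, x := (prod_const x).symm
      _ ≤ ∏ p ∈ S, (p : ℝ) := prod_le_prod (fun _ _ => hx.le) fun p hp => (hS p hp).2.1.le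
      _ ≤ 4 ^ ⌊y⌋₊ := by rw [← Nat.cast_prod]; exact_mod_cast hprod
  calc #S * log x = log (x ^ #S) := (log_pow _ _).symm
    _ ≤ log (4 ^ ⌊y⌋₊) := log_le_log (by positivity) hpow
    _ = ⌊y⌋₊ * log 4 := log_pow _ _
    _ ≤ y * log 4 := by gcongr; exact Nat.floor_le hy

theorem card_mediumPrimes_le {ε : ℝ} {H : ℕ} (hε : 0 < ε) (hH : 1 < (H : ℝ))
    (hεH : 4 / ε ^ 4 ≤ H) : (#(mediumPrimes ε H) : ℝ) ≤ 4 * ε ^ 2 * H / log H := by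
  have hlogH : 0 < log H := log_pos hH
  have hsqrt : √H ≤ ε ^ 2 * H / 2 := by
    rw [sqrt_le_left (by positivity)]
    rw [div_le_iff₀ (by positivity)] at hεH
    nlinarith
  have hlog : log H / 2 ≤ log (ε ^ 2 * H / 2) := by
    rw [← log_sqrt (by positivity)]
    exact log_le_log (by positivity) hsqrt
  have hcard := card_mul_log_le_of_forall_prime (S := mediumPrimes ε H) (by positivity)
    (by positivity) fun p hp => (mem_mediumPrimes.1 hp).2
  rw [le_div_iff₀ hlogH]
  nlinarith [mul_le_mul_of_nonneg_left hlog (Nat.cast_nonneg (α := ℝ) #(mediumPrimes ε H)),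
    mul_le_mul_of_nonneg_left log_four_le_two (by positivity : 0 ≤ ε ^ 2 * H)]

/-- The summand `F_p(y)` of `bilinearForm`; its `Int.ModEq` condition unfolds to the `%`-equation
written there. -/
noncomputable def bilinearFormComponent (H a : ℕ) (b h : ℤ) (c : ℕ → ℂ) (x₁ x₂ : ℤ → ℂ)
    (p y : ℕ) : ℂ :=
  c p *
    ∑ j ∈ (Finset.Icc (1 : ℤ) (H : ℤ)).filter
        (fun j => 1 ≤ j + (p : ℤ) * h ∧ j + (p : ℤ) * h ≤ (H : ℤ)),
      (if (a * y + j : ℤ) ≡ p * b [ZMOD a * p] then (1 : ℂ) else 0) * x₁ j * x₂ (j + p * h)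

section BilinearFormComponent

variable (H a : ℕ) (b h : ℤ) (c : ℕ → ℂ) (x₁ x₂ : ℤ → ℂ)

theorem bilinearFormComponent_mod (p y : ℕ) :
    bilinearFormComponent H a b h c x₁ x₂ p (y % p)
      = bilinearFormComponent H a b h c x₁ x₂ p y := by
  have hy (j : ℤ) : (a : ℤ) * y + j = a * ↑(y % p) + j + a * p * ↑(y / p) := by
    have : ((y % p : ℕ) : ℤ) + p * ((y / p : ℕ) : ℤ) = y := by exact_mod_cast Nat.mod_add_div y p
    linear_combination (-(a : ℤ)) * this
  have hmod (j : ℤ) : (a * y + j : ℤ) ≡ a * ↑(y % p) + j [ZMOD a * p] := by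
    rw [Int.ModEq, hy j, Int.add_mul_emod_self_left]
  have hiff (j : ℤ) :
      (a * ↑(y % p) + j : ℤ) ≡ p * b [ZMOD a * p] ↔ (a * y + j) ≡ p * b [ZMOD a * p] :=
    ⟨(hmod j).trans, (hmod j).symm.trans⟩
  simp only [bilinearFormComponent, hiff]

theorem bilinearForm_eq_sum_mod (ε : ℝ) (y : ℕ) :
    bilinearForm ε H a b h c x₁ x₂ y
      = ∑ p ∈ mediumPrimes ε H, bilinearFormComponent H a b h c x₁ x₂ p (y % p) := by
  simp only [bilinearFormComponent_mod]
  rfl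

theorem norm_bilinearFormComponent_le {c : ℕ → ℂ} {x₁ x₂ : ℤ → ℂ} {p : ℕ} (hap : 0 < a * p)
    (hc : ‖c p‖ ≤ 1) (hx₁ : ∀ j, ‖x₁ j‖ ≤ 1) (hx₂ : ∀ j, ‖x₂ j‖ ≤ 1) (r : ℕ) :
    ‖bilinearFormComponent H a b h c x₁ x₂ p r‖ ≤ H / (a * p) + 1 := by
  set J := (Icc (1 : ℤ) H).filter (fun j => 1 ≤ j + (p : ℤ) * h ∧ j + (p : ℤ) * h ≤ (H : ℤ))
  have hcount : #{j ∈ J | (a * r + j : ℤ) ≡ p * b [ZMOD a * p]}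
      ≤ #{j ∈ Ioc (0 : ℤ) H | j ≡ p * b - a * r [ZMOD a * p]} := by
    refine card_le_card fun j hj => ?_
    simp only [J, mem_filter, mem_Icc, mem_Ioc, Int.modEq_iff_dvd] at hj ⊢
    refine ⟨⟨by omega, hj.1.1.2⟩, ?_⟩
    convert hj.2 using 1
    ring
  calc ‖bilinearFormComponent H a b h c x₁ x₂ p r‖
      ≤ ∑ j ∈ J, if (a * r + j : ℤ) ≡ p * b [ZMOD a * p] then (1 : ℝ) else 0 := by
        rw [bilinearFormComponent, norm_mul]
        refine (mul_le_of_le_one_left (norm_nonneg _) hc).trans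
          ((norm_sum_le _ _).trans (sum_le_sum fun j _ => ?_))
        split_ifs
        · simpa using mul_le_one₀ (hx₁ j) (norm_nonneg _) (hx₂ _)
        · simp
    _ = #{j ∈ J | (a * r + j : ℤ) ≡ p * b [ZMOD a * p]} := by rw [sum_boole]
    _ ≤ #{j ∈ Ioc (0 : ℤ) H | j ≡ p * b - a * r [ZMOD a * p]} := by exact_mod_cast hcount
    _ ≤ H / (a * p) + 1 := by
        simpa using Int.card_filter_Ioc_modEq_le (Int.natCast_nonneg H) _
          (r := a * p) (by exact_mod_cast hap)

end BilinearFormComponent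

theorem norm_bilinearFormComponent_le_of_mem_mediumPrimes {ε : ℝ} (hε : 0 < ε) (hε₁ : ε ≤ 1)
    {H a : ℕ} (ha : 0 < a) (b h : ℤ) {c : ℕ → ℂ} {x₁ x₂ : ℤ → ℂ} {p : ℕ}
    (hp : p ∈ mediumPrimes ε H) (hc : ‖c p‖ ≤ 1) (hx₁ : ∀ j, ‖x₁ j‖ ≤ 1) (hx₂ : ∀ j, ‖x₂ j‖ ≤ 1)
    (r : ℕ) : ‖bilinearFormComponent H a b h c x₁ x₂ p r‖ ≤ 3 / ε ^ 2 := by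
  obtain ⟨-, hprime, hp_gt, -⟩ := mem_mediumPrimes.1 hp
  have hp0 : (0 : ℝ) < p := Nat.cast_pos.2 hprime.pos
  have hap : (p : ℝ) ≤ a * p := le_mul_of_one_le_left hp0.le (Nat.one_le_cast.2 ha)
  have hHp : (H : ℝ) / p ≤ 2 / ε ^ 2 := by
    rw [div_le_div_iff₀ hp0 (by positivity)]
    linarith
  have hε' : 1 ≤ 1 / ε ^ 2 := by rw [le_div_iff₀ (by positivity)]; nlinarith
  calc _ ≤ (H : ℝ) / (a * p) + 1 :=
        norm_bilinearFormComponent_le H a b h (Nat.mul_pos ha hprime.pos) hc hx₁ hx₂ r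
    _ ≤ (H : ℝ) / p + 1 := by gcongr
    _ ≤ 2 / ε ^ 2 + 1 / ε ^ 2 := by gcongr
    _ = 3 / ε ^ 2 := by ring

theorem four_mul_exp_le_exp_neg_pow_seven {ε L H : ℝ} (hε : 0 < ε) (hε₀ : ε < 1 / 2304)
    (hL : 0 < L) (hH : 0 < H) (hHL : 4608 * L ≤ ε ^ 6 * H) :
    4 * exp (-(ε ^ 2 * H / L) ^ 2 / (32 * (4 * ε ^ 2 * H / L) * (3 / ε ^ 2) ^ 2))
      ≤ exp (-ε ^ 7 * H / L) := by
  have hexponent : -(ε ^ 2 * H / L) ^ 2 / (32 * (4 * ε ^ 2 * H / L) * (3 / ε ^ 2) ^ 2)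
      = -(ε ^ 6 * (H / L)) / 1152 := by
    field_simp
    ring
  have hQ : 4608 ≤ ε ^ 6 * (H / L) := by rw [mul_div_assoc', le_div_iff₀ hL]; exact hHL
  have hε₇ : ε ^ 7 * (H / L) ≤ ε ^ 6 * (H / L) / 2304 := by
    have : ε ^ 7 = ε * ε ^ 6 := by ring
    rw [this, mul_assoc]
    nlinarith [mul_lt_mul_of_pos_right hε₀ (by positivity : 0 < ε ^ 6 * (H / L))]
  rw [hexponent, ← exp_log (by norm_num : (0 : ℝ) < 4), ← exp_add,
    show -ε ^ 7 * H / L = -(ε ^ 7 * (H / L)) by ring]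
  gcongr
  linarith [log_four_le_two]

theorem eventually_one_lt_and_le_and_log_le {ε : ℝ} (hε : 0 < ε) :
    ∀ᶠ H : ℕ in atTop, 1 < (H : ℝ) ∧ 4 / ε ^ 4 ≤ H ∧ 4608 * log H ≤ ε ^ 6 * H := by
  refine tendsto_natCast_atTop_atTop.eventually
    (p := fun x : ℝ => 1 < x ∧ 4 / ε ^ 4 ≤ x ∧ 4608 * log x ≤ ε ^ 6 * x) ?_
  filter_upwards [eventually_gt_atTop 1, eventually_ge_atTop (4 / ε ^ 4),
    isLittleO_log_id_atTop.bound (c := ε ^ 6 / 4608) (by positivity)] with x h1 h4 hlog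
  rw [norm_of_nonneg (log_nonneg h1.le), id, norm_of_nonneg (by linarith)] at hlog
  exact ⟨h1, h4, by linarith⟩

open scoped Classical in
/-- **Concentration (Hoeffding) for the bilinear form**: for all but an exponentially small
proportion of the residue classes `y ∈ ℤ/P_Hℤ`, the quantity `F(y)` is within `ε²H/log H` of
its average. -/
theorem bilinear_form_concentration :
    ∃ ε₀ : ℝ, 0 < ε₀ ∧ ∀ ε : ℝ, 0 < ε → ε < ε₀ →
      ∀ a : ℕ, 0 < a → ∀ b h : ℤ, h ≠ 0 →
      ∃ H₀ : ℕ, ∀ H : ℕ, H₀ ≤ H →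
      ∀ c : ℕ → ℂ, (∀ p ∈ mediumPrimes ε H, ‖c p‖ = 1) →
      ∀ x₁ x₂ : ℤ → ℂ, (∀ j : ℤ, ‖x₁ j‖ ≤ 1) → (∀ j : ℤ, ‖x₂ j‖ ≤ 1) →
        (((Finset.range (mediumPrimesProd ε H)).filter (fun y =>
            ε ^ 2 * H / Real.log H ≤
              ‖bilinearForm ε H a b h c x₁ x₂ y -
                (1 / (mediumPrimesProd ε H : ℂ)) *
                  ∑ y' ∈ Finset.range (mediumPrimesProd ε H),
                    bilinearForm ε H a b h c x₁ x₂ y'‖)).card : ℝ)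
          ≤ Real.exp (-(ε ^ 7) * H / Real.log H) * mediumPrimesProd ε H := by
  refine ⟨1 / 2304, by norm_num, fun ε hε hε₀ a ha b h _ => ?_⟩
  obtain ⟨H₀, hH₀⟩ := eventually_atTop.1 (eventually_one_lt_and_le_and_log_le hε)
  refine ⟨H₀, fun H hH c hc x₁ x₂ hx₁ hx₂ => ?_⟩
  obtain ⟨hH1, hHε, hHlog⟩ := hH₀ H hH
  have hlog : 0 < log H := log_pos hH1
  simp only [bilinearForm_eq_sum_mod]
  calc _ ≤ 4 * (mediumPrimesProd ε H : ℕ) * exp (-(ε ^ 2 * H / log H) ^ 2 /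
          (32 * (4 * ε ^ 2 * H / log H) * (3 / ε ^ 2) ^ 2)) :=
        card_filter_le_of_norm_sum_mod_sub_average_ge (mediumPrimes_pairwise_coprime ε H)
          (zero_notMem_mediumPrimes ε H) _ (by positivity)
          (fun p hp r _ => norm_bilinearFormComponent_le_of_mem_mediumPrimes hε (by linarith) ha
            b h hp (hc p hp).le hx₁ hx₂ r)
          (by positivity) (card_mediumPrimes_le hε hH1 hHε) (by positivity)
    _ ≤ exp (-ε ^ 7 * H / log H) * mediumPrimesProd ε H := by
        rw [mul_comm 4, mul_assoc, mul_comm]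
        gcongr
        exact four_mul_exp_le_exp_neg_pow_seven hε hε₀ hlog (by linarith) hHlog
end
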